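/- For a single dRep under majority agreement (k = 0), proxy selection admits an approximation ratio of min(n, 3α/β), where α = |∪_{i∈N} R_i| is the total number of revealed proposals across all voters and β = min_i |R_i| is the minimum revealed set size: either using dRep0 (approving only win(P)) directly elects a proposal of intrinsic score at least (β/(3α))·opt(P), or the revealed profile alone contains a proposal with revealed score at least (β/(3α))·opt(P). -/

import Mathlib

open Finset

/-- An instance of proxy selection: `intrinsic i j` is voter `i`'s intrinsic approval of
proposal `j`; `visible i j` records whether this preference is revealed to the voter
(the revealed preference is `some (intrinsic i j)` if visible and `⊥` otherwise). -/
structure PSInstance (n m : ℕ) where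
  intrinsic : Fin n → Fin m → Bool
  visible : Fin n → Fin m → Bool

namespace PSInstance

variable {n m : ℕ}

/-- Revealed preference of voter `i` on proposal `j`. -/
def revealed (I : PSInstance n m) (i : Fin n) (j : Fin m) : Option Bool :=
  if I.visible i j then some (I.intrinsic i j) else none

/-- The revealed set `R_i` of voter `i`. -/
def Rset (I : PSInstance n m) (i : Fin n) : Finset (Fin m) :=
  univ.filter fun j => I.visible i j

/-- `m_i = |R_i|`. -/
def mi (I : PSInstance n m) (i : Fin n) : ℕ := (I.Rset i).card

/-- Hamming distance between voter `i`'s revealed ballot and type `t`, restricted to `R_i`. -/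
def dist (I : PSInstance n m) (i : Fin n) (t : Fin m → Bool) : ℕ :=
  (univ.filter fun j => I.visible i j ∧ I.intrinsic i j ≠ t j).card

/-- Voter `i` (with reluctance parameter `k`) is attracted by a dRep of type `t`. -/
def Attracted (I : PSInstance n m) (k : ℕ) (i : Fin n) (t : Fin m → Bool) : Prop :=
  I.dist i t ≤ (I.mi i - k) / 2

instance (I : PSInstance n m) (k : ℕ) (i : Fin n) (t : Fin m → Bool) :
    Decidable (I.Attracted k i t) := by unfold Attracted; exact inferInstance

/-- Intrinsic approval score of proposal `j`. -/
def sc (I : PSInstance n m) (j : Fin m) : ℕ :=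
  (univ.filter fun i => I.intrinsic i j = true).card

/-- Revealed approval score of proposal `j`. -/
def rsc (I : PSInstance n m) (j : Fin m) : ℕ :=
  (univ.filter fun i => I.visible i j ∧ I.intrinsic i j = true).card

/-- `j` is an intrinsically optimal proposal (`win(P)`). -/
def IsOpt (I : PSInstance n m) (j : Fin m) : Prop := ∀ j', I.sc j' ≤ I.sc j

/-- Total score of proposal `j` given a family `D` of dReps and a delegation assignment
`deleg` (delegating voters contribute through their dRep's ballot, the rest vote their
revealed preferences directly). -/
def totalScore {ι : Type} (I : PSInstance n m) (D : ι → Fin m → Bool)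
    (deleg : Fin n → Option ι) (j : Fin m) : ℕ :=
  (univ.filter fun i => (match deleg i with
    | some d => D d j
    | none => I.visible i j && I.intrinsic i j) = true).card

/-- A delegation assignment is valid (w.r.t. per-voter reluctance parameters `k`) if every
delegating voter is attracted by their chosen dRep, and every voter attracted by at least
one dRep delegates (to an arbitrary one of them). -/
def ValidDeleg {ι : Type} (I : PSInstance n m) (k : Fin n → ℕ) (D : ι → Fin m → Bool)
    (deleg : Fin n → Option ι) : Prop :=
  (∀ i d, deleg i = some d → I.Attracted (k i) i (D d)) ∧
  (∀ i, (∃ d, I.Attracted (k i) i (D d)) → deleg i ≠ none)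

/-- `j` is elected: it maximizes total score, ties broken in favor of maximum intrinsic score. -/
def Elected {ι : Type} (I : PSInstance n m) (D : ι → Fin m → Bool)
    (deleg : Fin n → Option ι) (j : Fin m) : Prop :=
  (∀ j', I.totalScore D deleg j' ≤ I.totalScore D deleg j) ∧
  (∀ j', I.totalScore D deleg j' = I.totalScore D deleg j → I.sc j' ≤ I.sc j)

/-- `j` is elected when ties are broken in favor of maximum *revealed* score. -/
def ElectedRev {ι : Type} (I : PSInstance n m) (D : ι → Fin m → Bool)
    (deleg : Fin n → Option ι) (j : Fin m) : Prop :=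
  (∀ j', I.totalScore D deleg j' ≤ I.totalScore D deleg j) ∧
  (∀ j', I.totalScore D deleg j' = I.totalScore D deleg j → I.rsc j' ≤ I.rsc j)

end PSInstance

/-!
Let `p` be the proposal approved by the single dRep, `α = |⋃ R_i|`, and `j` an elected
proposal; for `j = p` it suffices that `β ≤ α`, so let `j ≠ p`. Since the dRep does not approve
`j`, the total score of `j` only counts direct revealed approvals, so every total score, and in
particular the number of delegators, is at most `sc j`. An approver of `p` who does not delegate
is not attracted by the dRep, so at least half of its at least `β` revealed entries are
approvals. Double counting these approvals over the `α` revealed proposals, each of which gets at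
most `sc j` direct approvals, gives `β · #(non-delegating approvers) ≤ 2α · sc j`, while
`β · #(delegating approvers) ≤ α · sc j`. Hence `β · sc p ≤ 3α · sc j`, which gives both the
dichotomy and the ratio `min(n, 3α/β)`.
-/

namespace PSInstance

variable {n m : ℕ} (I : PSInstance n m)

def revealedApprovals (i : Fin n) : Finset (Fin m) :=
  (I.Rset i).filter fun j => I.intrinsic i j

def directScore {ι : Type} (deleg : Fin n → Option ι) (j : Fin m) : ℕ :=
  #{i | deleg i = none ∧ I.visible i j ∧ I.intrinsic i j}

lemma mi_le_card_biUnion_Rset (i : Fin n) : I.mi i ≤ #(univ.biUnion I.Rset) :=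
  card_le_card (subset_biUnion_of_mem I.Rset (mem_univ i))

lemma mul_card_le_of_le_mi {β : ℕ} (hβ : ∀ i, β ≤ I.mi i) (s : Finset (Fin n)) :
    β * #s ≤ #(univ.biUnion I.Rset) * #s := by
  rcases s.eq_empty_or_nonempty with rfl | ⟨i, -⟩
  · simp
  · exact Nat.mul_le_mul_right _ ((hβ i).trans (I.mi_le_card_biUnion_Rset i))

lemma sc_le (j : Fin m) : I.sc j ≤ n :=
  (card_filter_le _ _).trans_eq (card_fin n)

section Delegation

variable {ι : Type} (D : ι → Fin m → Bool) (deleg : Fin n → Option ι)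

lemma directScore_le_sc (j : Fin m) : I.directScore deleg j ≤ I.sc j :=
  card_le_card fun i hi => by simp_all

lemma directScore_le_totalScore (j : Fin m) : I.directScore deleg j ≤ I.totalScore D deleg j :=
  card_le_card fun i hi => by simp_all

lemma totalScore_eq_directScore {j : Fin m} (hD : ∀ d, D d j = false) :
    I.totalScore D deleg j = I.directScore deleg j := by
  unfold totalScore directScore
  congr 1
  refine filter_congr fun i _ => ?_
  cases deleg i <;> simp [hD]

lemma card_delegating_le_totalScore {j : Fin m} (hD : ∀ d, D d j = true) :
    #{i | deleg i ≠ none} ≤ I.totalScore D deleg j := by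
  refine card_le_card fun i hi => ?_
  obtain ⟨d, hd⟩ := Option.ne_none_iff_exists'.mp (mem_filter.mp hi).2
  simp [hd, hD]

lemma totalScore_le_sc_of_elected {j : Fin m} (hD : ∀ d, D d j = false)
    (hel : I.Elected D deleg j) (j' : Fin m) : I.totalScore D deleg j' ≤ I.sc j :=
  calc I.totalScore D deleg j' ≤ I.totalScore D deleg j := hel.1 j'
    _ = I.directScore deleg j := I.totalScore_eq_directScore D deleg hD
    _ ≤ I.sc j := I.directScore_le_sc deleg j

lemma sum_card_revealedApprovals_le {s : Finset (Fin n)} (hs : ∀ i ∈ s, deleg i = none) :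
    ∑ i ∈ s, #(I.revealedApprovals i) ≤
      ∑ j ∈ univ.biUnion I.Rset, I.directScore deleg j := by
  let r : Fin n → Fin m → Prop := fun i j => I.visible i j ∧ I.intrinsic i j
  have hAbove : ∀ i, (univ.biUnion I.Rset).bipartiteAbove r i = I.revealedApprovals i := by
    intro i
    ext j
    simp only [bipartiteAbove, revealedApprovals, Rset, r, mem_filter, mem_biUnion, mem_univ,
      true_and]
    exact ⟨fun h => ⟨h.2.1, h.2.2⟩, fun h => ⟨⟨i, h.1⟩, h⟩⟩
  have hBelow : ∀ j, #(s.bipartiteBelow r j) ≤ I.directScore deleg j := fun j =>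
    card_le_card fun i hi => by
      simp only [bipartiteBelow, mem_filter, r] at hi
      simp [hs i hi.1, hi.2.1, hi.2.2]
  calc ∑ i ∈ s, #(I.revealedApprovals i)
      = ∑ i ∈ s, #((univ.biUnion I.Rset).bipartiteAbove r i) := by simp only [hAbove]
    _ = ∑ j ∈ univ.biUnion I.Rset, #(s.bipartiteBelow r j) :=
      sum_card_bipartiteAbove_eq_sum_card_bipartiteBelow r
    _ ≤ _ := sum_le_sum fun j _ => hBelow j

lemma ValidDeleg.not_attracted {k : Fin n → ℕ} (hvd : I.ValidDeleg k D deleg) {i : Fin n}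
    (hi : deleg i = none) (d : ι) : ¬ I.Attracted (k i) i (D d) :=
  fun h => hvd.2 i ⟨d, h⟩ hi

end Delegation

lemma mi_lt_two_mul_dist {i : Fin n} {t : Fin m → Bool} (h : ¬ I.Attracted 0 i t) :
    I.mi i < 2 * I.dist i t := by
  unfold Attracted at h
  omega

lemma dist_le_card_revealedApprovals {i : Fin n} {p : Fin m} (hp : I.intrinsic i p) :
    I.dist i (fun j => decide (j = p)) ≤ #(I.revealedApprovals i) := by
  refine card_le_card fun j hj => ?_
  simp only [revealedApprovals, Rset, mem_filter, mem_univ, true_and] at hj ⊢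
  refine ⟨hj.1, ?_⟩
  by_cases hjp : j = p
  · exact hjp ▸ hp
  · simpa [hjp] using hj.2

theorem mul_sc_le_of_elected_single (p : Fin m) {β : ℕ} (hβ : ∀ i, β ≤ I.mi i)
    {deleg : Fin n → Option Unit}
    (hvd : I.ValidDeleg (fun _ => 0) (fun _ : Unit => fun j => decide (j = p)) deleg)
    {j : Fin m} (hel : I.Elected (fun _ : Unit => fun j => decide (j = p)) deleg j) :
    β * I.sc p ≤ 3 * #(univ.biUnion I.Rset) * I.sc j := by
  set D : Unit → Fin m → Bool := fun _ j => decide (j = p)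
  set α := #(univ.biUnion I.Rset)
  obtain rfl | hjp := eq_or_ne j p
  · have := I.mul_card_le_of_le_mi hβ {i | I.intrinsic i j}
    unfold sc
    nlinarith
  have hT : ∀ j', I.totalScore D deleg j' ≤ I.sc j :=
    I.totalScore_le_sc_of_elected D deleg (fun _ => by simp [D, hjp]) hel
  set A : Finset (Fin n) := {i | I.intrinsic i p}
  set B := A.filter fun i => deleg i ≠ none
  set C := A.filter fun i => ¬ deleg i ≠ none
  have hBC : #B + #C = I.sc p := card_filter_add_card_filter_not _
  have hB : #B ≤ I.sc j :=
    calc #B ≤ #{i | deleg i ≠ none} := card_le_card (filter_subset_filter _ (subset_univ A))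
      _ ≤ I.totalScore D deleg p := I.card_delegating_le_totalScore D deleg (by simp [D])
      _ ≤ I.sc j := hT p
  have hC_undelegated : ∀ i ∈ C, deleg i = none := fun i hi => by
    simpa using (mem_filter.mp hi).2
  have hC_revealed : ∀ i ∈ C, β ≤ 2 * #(I.revealedApprovals i) := fun i hi => by
    have hnot : I.mi i < 2 * I.dist i (fun j => decide (j = p)) :=
      I.mi_lt_two_mul_dist (hvd.not_attracted I D deleg (hC_undelegated i hi) ())
    have hdist := I.dist_le_card_revealedApprovals (p := p)
      (by simpa [A] using (mem_filter.mp hi).1)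
    have := hβ i
    omega
  have hC : β * #C ≤ 2 * (α * I.sc j) :=
    calc β * #C = ∑ _i ∈ C, β := by rw [sum_const, smul_eq_mul, mul_comm]
      _ ≤ ∑ i ∈ C, 2 * #(I.revealedApprovals i) := sum_le_sum hC_revealed
      _ = 2 * ∑ i ∈ C, #(I.revealedApprovals i) := (mul_sum _ _ _).symm
      _ ≤ 2 * ∑ j' ∈ univ.biUnion I.Rset, I.directScore deleg j' :=
        Nat.mul_le_mul_left 2 (I.sum_card_revealedApprovals_le deleg hC_undelegated)
      _ ≤ 2 * (α * I.sc j) := by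
        refine Nat.mul_le_mul_left 2 ((sum_le_card_nsmul _ _ _ fun j' _ => ?_).trans_eq
          (smul_eq_mul _ _))
        exact (I.directScore_le_totalScore D deleg j').trans (hT j')
  have hB' : β * #B ≤ α * I.sc j :=
    (I.mul_card_le_of_le_mi hβ B).trans (Nat.mul_le_mul_left α hB)
  calc β * I.sc p = β * #B + β * #C := by rw [← hBC, mul_add]
    _ ≤ α * I.sc j + 2 * (α * I.sc j) := add_le_add hB' hC
    _ = 3 * α * I.sc j := by ring

end PSInstance

lemma le_min_mul_of_mul_le {a b c k n : ℕ} (hb : 0 < b) (han : a ≤ n) (h : b * a ≤ k * c) :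
    (a : ℚ) ≤ min (n : ℚ) (k / b) * c := by
  have hb' : (0 : ℚ) < b := by exact_mod_cast hb
  rw [min_mul_of_nonneg _ _ (Nat.cast_nonneg c)]
  refine le_min ?_ ?_
  · rcases Nat.eq_zero_or_pos c with rfl | hc
    · have : a = 0 := by simpa [hb.ne'] using h
      simp [this]
    · exact_mod_cast han.trans (Nat.le_mul_of_pos_right n hc)
  · rw [div_mul_eq_mul_div, le_div_iff₀ hb', mul_comm]
    exact_mod_cast h

theorem stmt13_general (n m : ℕ) (I : PSInstance n m) (jopt : Fin m)
    (β : ℕ) (hβ : ∀ i, β ≤ I.mi i) (hβpos : 0 < β) :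
    ((∃ j, (β : ℚ) * I.sc jopt ≤ 3 * (Finset.univ.biUnion I.Rset).card * I.rsc j) ∨
      (∀ deleg : Fin n → Option Unit,
        I.ValidDeleg (fun _ => 0) (fun _ : Unit => fun j => decide (j = jopt)) deleg →
        ∀ j, I.Elected (fun _ : Unit => fun j => decide (j = jopt)) deleg j →
          (β : ℚ) * I.sc jopt ≤ 3 * (Finset.univ.biUnion I.Rset).card * I.sc j)) ∧
    (∃ t : Fin m → Bool, ∀ deleg : Fin n → Option Unit,
      I.ValidDeleg (fun _ => 0) (fun _ => t) deleg →
      ∀ j, I.Elected (fun _ => t) deleg j →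
        (I.sc jopt : ℚ) ≤
          min (n : ℚ) ((3 * (Finset.univ.biUnion I.Rset).card) / β) * I.sc j) := by
  refine ⟨Or.inr fun deleg hvd j hel => ?_,
    ⟨fun j => decide (j = jopt), fun deleg hvd j hel => ?_⟩⟩
  · exact_mod_cast I.mul_sc_le_of_elected_single jopt hβ hvd hel
  · have := le_min_mul_of_mul_le hβpos (I.sc_le jopt)
      (I.mul_sc_le_of_elected_single jopt hβ hvd hel)
    exact_mod_cast this

/-- Under majority agreement, with `α` the number of proposals revealed to
some voter and `β` a positive lower bound on all revealed-set sizes, either the revealed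
profile already contains a proposal of revealed score at least `β·opt/(3α)`, or dRep0
(approving only the optimum) makes every elected proposal have intrinsic score at least
`β·opt/(3α)`; in any case a single dRep achieves approximation ratio `min(n, 3α/β)`. -/
theorem stmt13 (n m : ℕ) (I : PSInstance n m) (jopt : Fin m) (hopt : I.IsOpt jopt)
    (β : ℕ) (hβ : ∀ i, β ≤ I.mi i) (hβpos : 0 < β) :
    ((∃ j, (β : ℚ) * I.sc jopt ≤ 3 * (Finset.univ.biUnion I.Rset).card * I.rsc j) ∨
      (∀ deleg : Fin n → Option Unit,
        I.ValidDeleg (fun _ => 0) (fun _ : Unit => fun j => decide (j = jopt)) deleg →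
        ∀ j, I.Elected (fun _ : Unit => fun j => decide (j = jopt)) deleg j →
          (β : ℚ) * I.sc jopt ≤ 3 * (Finset.univ.biUnion I.Rset).card * I.sc j)) ∧
    (∃ t : Fin m → Bool, ∀ deleg : Fin n → Option Unit,
      I.ValidDeleg (fun _ => 0) (fun _ => t) deleg →
      ∀ j, I.Elected (fun _ => t) deleg j →
        (I.sc jopt : ℚ) ≤
          min (n : ℚ) ((3 * (Finset.univ.biUnion I.Rset).card) / β) * I.sc j) :=
  stmt13_general n m I jopt β hβ hβpos
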